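/- arXiv:1906.02060 — 9 statements merged into one kernel-verified Lean document; each statement's English description precedes it below -/
import Mathlib

section
/- For all real numbers a, b with 0 < a < b and all real z, the Lebesgue measure of the set {y ∈ ℝ : a ≤ cosh(y + z) ≤ b} is at most 2·log(2b/a). -/
open Real MeasureTheory

lemma cosh_le_exp_abs (x : ℝ) : Real.cosh x ≤ Real.exp |x| := by
  rw [Real.cosh_eq]
  rcases le_total 0 x with hx | hx
  · rw [abs_of_nonneg hx]; nlinarith [Real.exp_le_exp.2 (by linarith : -x ≤ x)]
  · rw [abs_of_nonpos hx]; nlinarith [Real.exp_le_exp.2 (by linarith : x ≤ -x)]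

lemma exp_abs_le_two_cosh (x : ℝ) : Real.exp |x| ≤ 2 * Real.cosh x := by
  rw [Real.cosh_eq]
  rcases abs_cases x with ⟨h, _⟩ | ⟨h, _⟩ <;> rw [h] <;> nlinarith [Real.exp_pos x, Real.exp_pos (-x)]

theorem cosh_level_set_measure (a b z : ℝ) (ha : 0 < a) (hab : a < b) :
    volume {y : ℝ | a ≤ Real.cosh (y + z) ∧ Real.cosh (y + z) ≤ b}
      ≤ ENNReal.ofReal (2 * Real.log (2 * b / a)) := by
  set L := Real.log (2 * b) with hL
  set c := max (Real.log a) 0 with hc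
  have hb : 0 < b := ha.trans hab
  have hsub : {y : ℝ | a ≤ Real.cosh (y + z) ∧ Real.cosh (y + z) ≤ b} ⊆
      Set.Icc (-L - z) (-c - z) ∪ Set.Icc (c - z) (L - z) := by
    rintro y ⟨h1, h2⟩
    have hub : |y + z| ≤ L := by
      have : Real.exp |y + z| ≤ 2 * b := le_trans (exp_abs_le_two_cosh _) (by linarith)
      calc |y + z| = Real.log (Real.exp |y + z|) := (Real.log_exp _).symm
        _ ≤ L := Real.log_le_log (Real.exp_pos _) this
    have hlb : c ≤ |y + z| := by
      have h3 : a ≤ Real.exp |y + z| := h1.trans (cosh_le_exp_abs _)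
      have : Real.log a ≤ |y + z| := by
        calc Real.log a ≤ Real.log (Real.exp |y + z|) := Real.log_le_log ha h3
          _ = |y + z| := Real.log_exp _
      exact max_le this (abs_nonneg _)
    rcases abs_cases (y + z) with ⟨h, _⟩ | ⟨h, _⟩
    · right; constructor <;> [linarith [h ▸ hlb]; linarith [h ▸ hub]]
    · left; constructor <;> [linarith [h ▸ hub]; linarith [h ▸ hlb]]
  have hlog : L - c ≤ Real.log (2 * b / a) := by
    rw [Real.log_div (by positivity) (ne_of_gt ha)]
    have : Real.log a ≤ c := le_max_left _ _
    linarith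
  have hlogpos : 0 ≤ Real.log (2 * b / a) := by
    apply Real.log_nonneg
    rw [le_div_iff₀ ha]; linarith
  calc volume {y : ℝ | a ≤ Real.cosh (y + z) ∧ Real.cosh (y + z) ≤ b}
      ≤ volume (Set.Icc (-L - z) (-c - z) ∪ Set.Icc (c - z) (L - z)) :=
        measure_mono hsub
    _ ≤ volume (Set.Icc (-L - z) (-c - z)) + volume (Set.Icc (c - z) (L - z)) :=
        measure_union_le _ _
    _ = ENNReal.ofReal (L - c) + ENNReal.ofReal (L - c) := by
        rw [Real.volume_Icc, Real.volume_Icc]; ring_nf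
    _ ≤ ENNReal.ofReal (Real.log (2 * b / a)) + ENNReal.ofReal (Real.log (2 * b / a)) := by
        gcongr <;> exact ENNReal.ofReal_le_ofReal hlog
    _ = ENNReal.ofReal (2 * Real.log (2 * b / a)) := by
        rw [← ENNReal.ofReal_add hlogpos hlogpos]; ring_nf
end

section
/- For all r ≥ 1, the integral over y ∈ [-(r-1), r-1] of (1 - α_r(y)) dy is at most 1/(2e²) + 1/(4e⁵), where α_r(y) = ((1 + e^{-2y-2r})(1 + e^{2y-2r}))^{-1/2}. -/
open Real MeasureTheory

/-! Since `1 - (1 + z)^(-1/2) ≤ z / 2`, the integrand `1 - α_r(y)` is at most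
`(e^{-2y-2r} + e^{2y-2r} + e^{-4r}) / 2`, whose integral over `[-(r-1), r-1]` is explicit:
`(e^{-2} - e^{2-4r}) / 2 + (r - 1) e^{-4r}`. Dropping the negative term and bounding
`t e^{-t} ≤ e^{-1}` at `t = 4(r - 1)` gives `e^{-2} / 2 + e^{-5} / 4`. -/

theorem one_sub_rpow_neg_half_le {w : ℝ} (hw : 0 < w) :
    1 - w ^ (-(1/2) : ℝ) ≤ (w - 1) / 2 := by
  obtain ⟨s, hs, rfl⟩ : ∃ s, 0 < s ∧ w = s ^ 2 := ⟨√w, sqrt_pos.2 hw, (sq_sqrt hw.le).symm⟩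
  rw [rpow_neg (by positivity), ← sqrt_eq_rpow, sqrt_sq hs.le, ← sub_nonneg]
  have key : (s ^ 2 - 1) / 2 - (1 - s⁻¹) = (s - 1) ^ 2 * (s + 2) / (2 * s) := by
    field_simp; ring
  rw [key]; positivity

theorem one_sub_mul_rpow_neg_half_le {a b : ℝ} (ha : 0 ≤ a) (hb : 0 ≤ b) :
    1 - ((1 + a) * (1 + b)) ^ (-(1/2) : ℝ) ≤ (a + b + a * b) / 2 :=
  (one_sub_rpow_neg_half_le (by positivity)).trans_eq (by ring)

theorem integral_exp_mul_sub {c : ℝ} (hc : c ≠ 0) (d a b : ℝ) :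
    ∫ x in a..b, exp (c * x - d) = (exp (c * b - d) - exp (c * a - d)) / c := by
  rw [intervalIntegral.integral_comp_mul_sub (fun x => exp x) hc, integral_exp, smul_eq_mul,
    inv_mul_eq_div]

theorem integral_exp_neg_two_mul_add_exp_two_mul (r c : ℝ) :
    ∫ y in -c..c, (exp (-2 * y - 2 * r) + exp (2 * y - 2 * r) + exp (-(4 * r))) / 2
      = (exp (2 * c - 2 * r) - exp (-2 * c - 2 * r)) / 2 + c * exp (-(4 * r)) := by
  have hint (k : ℝ) : IntervalIntegrable (fun y => exp (k * y - 2 * r)) volume (-c) c :=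
    Continuous.intervalIntegrable (by fun_prop) _ _
  rw [intervalIntegral.integral_div, intervalIntegral.integral_add ((hint _).add (hint _))
    intervalIntegrable_const, intervalIntegral.integral_add (hint _) (hint _),
    integral_exp_mul_sub (by norm_num), integral_exp_mul_sub (by norm_num),
    intervalIntegral.integral_const, smul_eq_mul]
  ring_nf

theorem sub_one_mul_exp_neg_four_mul_le (r : ℝ) : (r - 1) * exp (-(4 * r)) ≤ exp (-5) / 4 :=
  calc (r - 1) * exp (-(4 * r)) = exp (-4) * (4 * (r - 1) * exp (-(4 * (r - 1)))) / 4 := by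
        rw [mul_left_comm, ← exp_add]; ring_nf
    _ ≤ exp (-4) * exp (-1) / 4 := by gcongr; exact mul_exp_neg_le_exp_neg_one _
    _ = exp (-5) / 4 := by rw [← exp_add]; norm_num

theorem integral_one_sub_alpha_le (r : ℝ) (hr : 1 ≤ r) :
    ∫ y in (-(r - 1))..(r - 1),
        (1 - ((1 + Real.exp (-2 * y - 2 * r)) * (1 + Real.exp (2 * y - 2 * r))) ^ (-(1/2) : ℝ))
      ≤ 1 / (2 * Real.exp 2) + 1 / (4 * Real.exp 5) := by
  have hcont : Continuous fun y : ℝ =>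
      1 - ((1 + exp (-2 * y - 2 * r)) * (1 + exp (2 * y - 2 * r))) ^ (-(1/2) : ℝ) :=
    continuous_const.sub <| (by fun_prop : Continuous _).rpow_const fun _ => Or.inl (by positivity)
  calc _ ≤ ∫ y in (-(r - 1))..(r - 1),
          (exp (-2 * y - 2 * r) + exp (2 * y - 2 * r) + exp (-(4 * r))) / 2 :=
        intervalIntegral.integral_mono_on (by linarith) (hcont.intervalIntegrable _ _)
          (Continuous.intervalIntegrable (by fun_prop) _ _) fun y _ =>
            (one_sub_mul_rpow_neg_half_le (exp_pos _).le (exp_pos _).le).trans_eq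
              (by rw [← exp_add]; ring_nf)
    _ = (exp (-2) - exp (2 - 4 * r)) / 2 + (r - 1) * exp (-(4 * r)) := by
        rw [integral_exp_neg_two_mul_add_exp_two_mul]; ring_nf
    _ ≤ exp (-2) / 2 + exp (-5) / 4 := by
        linarith [exp_pos (2 - 4 * r), sub_one_mul_exp_neg_four_mul_le r]
    _ = 1 / (2 * exp 2) + 1 / (4 * exp 5) := by rw [exp_neg, exp_neg]; ring
end

section
/- Let r ≥ 1, μ, ν positive integers, and define ψ(y) = ν/(2·cosh(y−r)) − μ/(2·cosh(y+r)). Then for all y ∈ [-(r-1), r-1], |ψ′(y)| ≥ tanh(1)·ψ(y). -/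
open Real

theorem psi_log_derivative_bound (r : ℝ) (hr : 1 ≤ r) (μ ν : ℤ) (hμ : 0 < μ) (hν : 0 < ν)
    (ψ : ℝ → ℝ)
    (hψ : ψ = fun y => (ν : ℝ) / (2 * Real.cosh (y - r)) - (μ : ℝ) / (2 * Real.cosh (y + r)))
    (y : ℝ) (hy : y ∈ Set.Icc (-(r - 1)) (r - 1)) :
    Real.tanh 1 * ψ y ≤ |deriv ψ y| := by
  obtain ⟨hy1, hy2⟩ := hy
  have hc1 : 0 < Real.cosh (y - r) := Real.cosh_pos _
  have hc2 : 0 < Real.cosh (y + r) := Real.cosh_pos _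
  have hry : (1:ℝ) ≤ r - y := by linarith
  have hyr : (1:ℝ) ≤ y + r := by linarith
  have hs1 : Real.sinh 1 ≤ Real.sinh (r - y) := Real.sinh_le_sinh.mpr hry
  have hs2 : Real.sinh 1 ≤ Real.sinh (y + r) := Real.sinh_le_sinh.mpr hyr
  have hsinh1 : 0 < Real.sinh 1 := Real.sinh_pos_iff.mpr one_pos
  have h1 : HasDerivAt (fun y => 2 * Real.cosh (y - r)) (2 * Real.sinh (y - r)) y := by
    have := (Real.hasDerivAt_cosh (y - r)).comp y ((hasDerivAt_id y).sub_const r)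
    simpa [mul_comm] using this.const_mul 2
  have h2 : HasDerivAt (fun y => 2 * Real.cosh (y + r)) (2 * Real.sinh (y + r)) y := by
    have := (Real.hasDerivAt_cosh (y + r)).comp y ((hasDerivAt_id y).add_const r)
    simpa [mul_comm] using this.const_mul 2
  have hd : HasDerivAt ψ
      ((0 * (2 * Real.cosh (y - r)) - (ν:ℝ) * (2 * Real.sinh (y - r))) / (2 * Real.cosh (y - r))^2
      - (0 * (2 * Real.cosh (y + r)) - (μ:ℝ) * (2 * Real.sinh (y + r))) / (2 * Real.cosh (y + r))^2) y := by
    rw [hψ]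
    exact ((hasDerivAt_const y (ν:ℝ)).div h1 (by positivity)).sub
      ((hasDerivAt_const y (μ:ℝ)).div h2 (by positivity))
  have hD : deriv ψ y = (ν:ℝ) * Real.sinh (r - y) / (2 * Real.cosh (r - y)^2)
      + (μ:ℝ) * Real.sinh (y + r) / (2 * Real.cosh (y + r)^2) := by
    rw [hd.deriv]
    have e1 : Real.sinh (y - r) = -Real.sinh (r - y) := by
      rw [show y - r = -(r - y) by ring, Real.sinh_neg]
    have e2 : Real.cosh (y - r) = Real.cosh (r - y) := by
      rw [show y - r = -(r - y) by ring, Real.cosh_neg]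
    rw [e1, e2]
    have hc1' : Real.cosh (r - y) ≠ 0 := (by positivity : (0:ℝ) < Real.cosh (r - y)).ne'
    field_simp
    ring
  have hνpos : (0:ℝ) < (ν:ℝ) := by exact_mod_cast hν
  have hμpos : (0:ℝ) < (μ:ℝ) := by exact_mod_cast hμ
  have hc1' : 0 < Real.cosh (r - y) := Real.cosh_pos _
  have hs1' : 0 < Real.sinh (r - y) := lt_of_lt_of_le hsinh1 hs1
  have hs2' : 0 < Real.sinh (y + r) := lt_of_lt_of_le hsinh1 hs2
  have hDpos : 0 < deriv ψ y := by rw [hD]; positivity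
  rw [abs_of_pos hDpos, hD, hψ]
  simp only
  have e2 : Real.cosh (y - r) = Real.cosh (r - y) := by
    rw [show y - r = -(r - y) by ring, Real.cosh_neg]
  rw [e2]
  -- tanh 1 ≤ tanh (r - y) expressed as sinh/cosh
  have htanh : Real.tanh 1 ≤ Real.sinh (r - y) / Real.cosh (r - y) := by
    rw [Real.tanh_eq_sinh_div_cosh]
    rw [div_le_div_iff₀ (Real.cosh_pos _) hc1']
    have := Real.sinh_nonneg_iff.mpr (by linarith : (0:ℝ) ≤ (r - y) - 1)
    rw [Real.sinh_sub] at this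
    linarith
  have htanh_pos : 0 < Real.tanh 1 := by
    rw [Real.tanh_eq_sinh_div_cosh]; positivity
  have key1 : Real.tanh 1 * ((ν:ℝ) / (2 * Real.cosh (r - y)))
      ≤ (ν:ℝ) * Real.sinh (r - y) / (2 * Real.cosh (r - y)^2) := by
    have h := mul_le_mul_of_nonneg_right htanh (by positivity : (0:ℝ) ≤ (ν:ℝ) / (2 * Real.cosh (r - y)))
    refine h.trans_eq ?_
    field_simp
  have key2 : -(Real.tanh 1 * ((μ:ℝ) / (2 * Real.cosh (y + r))))
      ≤ (μ:ℝ) * Real.sinh (y + r) / (2 * Real.cosh (y + r)^2) := by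
    have : (0:ℝ) ≤ (μ:ℝ) * Real.sinh (y + r) / (2 * Real.cosh (y + r)^2) := by positivity
    nlinarith [mul_pos htanh_pos (div_pos hμpos (by positivity : (0:ℝ) < 2 * Real.cosh (y + r)))]
  nlinarith [key1, key2]
end

section
/- Let r ≥ 1, s > 0, and let μ < 0 < ν be integers. Define ψ(y) = ν/(2·cosh(y−r)) − μ/(2·cosh(y+r)). Then the Lebesgue measure of the set {y ∈ [-(r-1), r-1] : ψ(y) ∈ [s/4, 3s/2]} is at most 2·log(24). -/
open Real MeasureTheory

set_option maxHeartbeats 1000000 in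
theorem psi_level_set_measure (r s : ℝ) (hr : 1 ≤ r) (hs : 0 < s) (μ ν : ℤ)
    (hμ : μ < 0) (hν : 0 < ν)
    (ψ : ℝ → ℝ)
    (hψ : ψ = fun y => (ν : ℝ) / (2 * Real.cosh (y - r)) - (μ : ℝ) / (2 * Real.cosh (y + r))) :
    volume {y : ℝ | y ∈ Set.Icc (-(r - 1)) (r - 1) ∧ ψ y ∈ Set.Icc (s / 4) (3 * s / 2)}
      ≤ ENNReal.ofReal (2 * Real.log 24) := by
  obtain ⟨n, hn⟩ : ∃ n : ℝ, n = (ν : ℝ) := ⟨_, rfl⟩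
  obtain ⟨m, hm⟩ : ∃ m : ℝ, m = (-μ : ℝ) := ⟨_, rfl⟩
  obtain ⟨K, hK⟩ : ∃ K : ℝ, K = s * Real.exp r := ⟨_, rfl⟩
  have hn0 : 0 < n := by rw [hn]; exact_mod_cast hν
  have hm0 : 0 < m := by
    have : (μ : ℝ) < 0 := by exact_mod_cast hμ
    rw [hm]; push_cast; linarith
  have hK0 : 0 < K := by rw [hK]; exact mul_pos hs (exp_pos r)
  have hsub : {y : ℝ | y ∈ Set.Icc (-(r - 1)) (r - 1) ∧ ψ y ∈ Set.Icc (s / 4) (3 * s / 2)}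
      ⊆ Set.Icc (Real.log (m / (3 * K))) (Real.log (8 * m / K))
        ∪ Set.Icc (Real.log (K / (8 * n))) (Real.log (3 * K / n)) := by
    rintro y ⟨⟨hy1, hy2⟩, hψ1, hψ2⟩
    have hyr : y ≤ r := by linarith
    have hyr' : -r ≤ y := by linarith
    have hc1e : Real.cosh (y - r) = (Real.exp (y - r) + Real.exp (r - y)) / 2 := by
      rw [Real.cosh_eq, neg_sub]
    have hc2e : Real.cosh (y + r) = (Real.exp (y + r) + Real.exp (-(y + r))) / 2 := by
      rw [Real.cosh_eq]
    have he1 : Real.exp (y - r) ≤ Real.exp (r - y) := Real.exp_le_exp.2 (by linarith)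
    have he2 : Real.exp (-(y + r)) ≤ Real.exp (y + r) := Real.exp_le_exp.2 (by linarith)
    have hc1lb : Real.exp (r - y) / 2 ≤ Real.cosh (y - r) := by
      rw [hc1e]; have := Real.exp_pos (y - r); linarith
    have hc1ub : Real.cosh (y - r) ≤ Real.exp (r - y) := by
      rw [hc1e]; linarith
    have hc2lb : Real.exp (y + r) / 2 ≤ Real.cosh (y + r) := by
      rw [hc2e]; have := Real.exp_pos (-(y + r)); linarith
    have hc2ub : Real.cosh (y + r) ≤ Real.exp (y + r) := by
      rw [hc2e]; linarith
    have hc1pos : 0 < Real.cosh (y - r) := Real.cosh_pos (y - r)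
    have hc2pos : 0 < Real.cosh (y + r) := Real.cosh_pos (y + r)
    have hψy : ψ y = n / (2 * Real.cosh (y - r)) + m / (2 * Real.cosh (y + r)) := by
      rw [hψ, hn, hm]; push_cast; ring
    rw [hψy] at hψ1 hψ2
    -- term bounds
    have hpr1 : Real.exp (r - y) * Real.exp (y - r) = 1 := by
      rw [← Real.exp_add]; norm_num
    have hpr2 : Real.exp (y + r) * Real.exp (-(y + r)) = 1 := by
      rw [← Real.exp_add, show y + r + -(y + r) = 0 by ring, Real.exp_zero]
    have ht1lb : n * Real.exp (y - r) / 2 ≤ n / (2 * Real.cosh (y - r)) := by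
      have heq : n * Real.exp (y - r) / 2 = n / (2 * Real.exp (r - y)) := by
        rw [eq_div_iff (by positivity)]
        linear_combination n * hpr1
      rw [heq]
      gcongr <;> linarith
    have ht1ub : n / (2 * Real.cosh (y - r)) ≤ n * Real.exp (y - r) := by
      have heq : n * Real.exp (y - r) = n / Real.exp (r - y) := by
        rw [show y - r = -(r - y) by ring, Real.exp_neg, div_eq_mul_inv]
      rw [heq]
      gcongr <;> linarith
    have ht2lb : m * Real.exp (-(y + r)) / 2 ≤ m / (2 * Real.cosh (y + r)) := by
      have heq : m * Real.exp (-(y + r)) / 2 = m / (2 * Real.exp (y + r)) := by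
        rw [eq_div_iff (by positivity)]
        linear_combination m * hpr2
      rw [heq]
      gcongr <;> linarith
    have ht2ub : m / (2 * Real.cosh (y + r)) ≤ m * Real.exp (-(y + r)) := by
      have heq : m * Real.exp (-(y + r)) = m / Real.exp (y + r) := by
        rw [Real.exp_neg, div_eq_mul_inv]
      rw [heq]
      gcongr <;> linarith
    have ht1pos : 0 < n / (2 * Real.cosh (y - r)) := by positivity
    have ht2pos : 0 < m / (2 * Real.cosh (y + r)) := by positivity
    have hey : Real.exp (y - r) * Real.exp r = Real.exp y := by
      rw [← Real.exp_add]; congr 1; ring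
    have heny : Real.exp (-(y + r)) * Real.exp r = Real.exp (-y) := by
      rw [← Real.exp_add]; congr 1; ring
    -- upper bounds: n * exp y ≤ 3K and m * exp (-y) ≤ 3K
    have hub1 : n * Real.exp y ≤ 3 * K := by
      have h1 : n * Real.exp (y - r) ≤ 3 * s := by linarith
      calc n * Real.exp y = n * Real.exp (y - r) * Real.exp r := by rw [mul_assoc, hey]
        _ ≤ 3 * s * Real.exp r := mul_le_mul_of_nonneg_right h1 (exp_pos r).le
        _ = 3 * K := by rw [hK]; ring
    have hub2 : m * Real.exp (-y) ≤ 3 * K := by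
      have h1 : m * Real.exp (-(y + r)) ≤ 3 * s := by linarith [ht2ub, ht2lb, hψ2, ht1pos]
      calc m * Real.exp (-y) = m * Real.exp (-(y + r)) * Real.exp r := by
            rw [mul_assoc, heny]
        _ ≤ 3 * s * Real.exp r := mul_le_mul_of_nonneg_right h1 (exp_pos r).le
        _ = 3 * K := by rw [hK]; ring
    -- lower bound: K/4 ≤ n * exp y + m * exp (-y)
    have hlb : K / 4 ≤ n * Real.exp y + m * Real.exp (-y) := by
      have h1 : s / 4 ≤ n * Real.exp (y - r) + m * Real.exp (-(y + r)) := by linarith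
      calc K / 4 = (s / 4) * Real.exp r := by rw [hK]; ring
        _ ≤ (n * Real.exp (y - r) + m * Real.exp (-(y + r))) * Real.exp r :=
            mul_le_mul_of_nonneg_right h1 (exp_pos r).le
        _ = n * Real.exp y + m * Real.exp (-y) := by
            rw [add_mul, mul_assoc, mul_assoc, hey, heny]
    have hprody : Real.exp y * Real.exp (-y) = 1 := by
      rw [← Real.exp_add]; norm_num
    -- translate to y-intervals
    have hyub : y ≤ Real.log (3 * K / n) := by
      rw [Real.le_log_iff_exp_le (by positivity), le_div_iff₀ hn0]
      linarith [hub1]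
    have hylb : Real.log (m / (3 * K)) ≤ y := by
      have h2 : m / (3 * K) ≤ Real.exp y := by
        rw [div_le_iff₀ (by positivity)]
        nlinarith [Real.exp_pos y, Real.exp_pos (-y), hub2]
      calc Real.log (m / (3 * K)) ≤ Real.log (Real.exp y) :=
            Real.log_le_log (by positivity) h2
        _ = y := Real.log_exp y
    rcases le_or_gt (K / 8) (n * Real.exp y) with hcase | hcase
    · right
      refine ⟨?_, hyub⟩
      rw [Real.log_le_iff_le_exp (by positivity), div_le_iff₀ (by positivity)]
      linarith
    · left
      have hcase2 : K / 8 ≤ m * Real.exp (-y) := by linarith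
      refine ⟨hylb, ?_⟩
      have h2 : Real.exp y ≤ 8 * m / K := by
        rw [le_div_iff₀ hK0]
        nlinarith [Real.exp_pos y, Real.exp_pos (-y)]
      calc y = Real.log (Real.exp y) := (Real.log_exp y).symm
        _ ≤ Real.log (8 * m / K) := Real.log_le_log (Real.exp_pos y) h2
  calc volume {y : ℝ | y ∈ Set.Icc (-(r - 1)) (r - 1) ∧ ψ y ∈ Set.Icc (s / 4) (3 * s / 2)}
      ≤ volume (Set.Icc (Real.log (m / (3 * K))) (Real.log (8 * m / K))
        ∪ Set.Icc (Real.log (K / (8 * n))) (Real.log (3 * K / n))) := measure_mono hsub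
    _ ≤ volume (Set.Icc (Real.log (m / (3 * K))) (Real.log (8 * m / K)))
        + volume (Set.Icc (Real.log (K / (8 * n))) (Real.log (3 * K / n))) :=
        measure_union_le _ _
    _ = ENNReal.ofReal (Real.log (8 * m / K) - Real.log (m / (3 * K)))
        + ENNReal.ofReal (Real.log (3 * K / n) - Real.log (K / (8 * n))) := by
        rw [Real.volume_Icc, Real.volume_Icc]
    _ ≤ ENNReal.ofReal (2 * Real.log 24) := by
        have e1 : Real.log (8 * m / K) - Real.log (m / (3 * K)) = Real.log 24 := by
          rw [Real.log_div (by positivity) (ne_of_gt hK0),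
            Real.log_div (ne_of_gt hm0) (by positivity),
            Real.log_mul (by norm_num) (ne_of_gt hm0),
            Real.log_mul (by norm_num) (ne_of_gt hK0)]
          have h24 : Real.log 24 = Real.log 8 + Real.log 3 := by
            rw [← Real.log_mul (by norm_num) (by norm_num)]; norm_num
          rw [h24]; ring
        have e2 : Real.log (3 * K / n) - Real.log (K / (8 * n)) = Real.log 24 := by
          rw [Real.log_div (by positivity) (ne_of_gt hn0),
            Real.log_div (ne_of_gt hK0) (by positivity),
            Real.log_mul (by norm_num) (ne_of_gt hK0),
            Real.log_mul (by norm_num) (ne_of_gt hn0)]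
          have h24 : Real.log 24 = Real.log 3 + Real.log 8 := by
            rw [← Real.log_mul (by norm_num) (by norm_num)]; norm_num
          rw [h24]; ring
        rw [e1, e2, ← ENNReal.ofReal_add (Real.log_nonneg (by norm_num))
          (Real.log_nonneg (by norm_num))]
        apply le_of_eq; congr 1; ring
end

section
/- There exists a constant C such that for every λ with 0 < |λ| < 1/2 and every r ≥ 1, e^{-r} · ∫_ℝ (e^{-2r} + t²)^{-(2λ+1)/2} · (1 + e^{-2r} t²)^{(2λ-1)/2} dt ≤ (C/|λ|) · e^{-r(1-2|λ|)}. -/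
/-!
The integrand is even, so it suffices to integrate over `(0, ∞)`; write `ε = e^{-2r}`. Both
exponents are nonpositive, so the integrand is bounded by `ε^{-(2λ+1)/2}`, by `s^{-(2λ+1)}` and by
`ε^{(2λ-1)/2} s^{-2}`. Using these on `(0, e^{-r}]`, `(e^{-r}, e^r]` and `(e^r, ∞)` respectively
gives `e^{2λr}`, `(e^{2λr} - e^{-2λr}) / (2λ) ≤ e^{2|λ|r} / (2|λ|)` and `e^{-2λr}`; the factor
`1/|λ|` comes only from the middle range.
-/

open Real MeasureTheory Set

noncomputable def complementaryKernel (ε l t : ℝ) : ℝ :=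
  (ε + t ^ 2) ^ (-(2 * l + 1) / 2 : ℝ) * (1 + ε * t ^ 2) ^ ((2 * l - 1) / 2 : ℝ)

lemma exp_sub_exp_neg_div_le {x : ℝ} (hx : x ≠ 0) (y : ℝ) :
    (exp (x * y) - exp (-(x * y))) / x ≤ exp (|x| * y) / |x| := by
  rcases hx.lt_or_gt with hx | hx
  · rw [abs_of_neg hx, ← neg_div_neg_eq, neg_sub, neg_mul]
    exact div_le_div_of_nonneg_right (sub_le_self _ (exp_pos _).le) (neg_nonneg.mpr hx.le)
  · rw [abs_of_pos hx]
    exact div_le_div_of_nonneg_right (sub_le_self _ (exp_pos _).le) hx.le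

namespace complementaryKernel

variable {ε l : ℝ}

lemma nonneg (hε : 0 < ε) (t : ℝ) : 0 ≤ complementaryKernel ε l t := by
  unfold complementaryKernel; positivity

lemma continuous (hε : 0 < ε) : Continuous (complementaryKernel ε l) := by
  unfold complementaryKernel
  refine Continuous.mul ?_ ?_ <;>
    exact Continuous.rpow_const (by fun_prop) fun t => Or.inl (by positivity)

lemma exponents_nonpos (hl : |l| ≤ 1 / 2) : -(2 * l + 1) / 2 ≤ 0 ∧ (2 * l - 1) / 2 ≤ 0 := by
  constructor <;> linarith [abs_le.mp hl]

lemma le_const (hε : 0 < ε) (hl : |l| ≤ 1 / 2) (t : ℝ) :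
    complementaryKernel ε l t ≤ ε ^ (-(2 * l + 1) / 2 : ℝ) := by
  obtain ⟨hp, hq⟩ := exponents_nonpos hl
  calc complementaryKernel ε l t ≤ ε ^ (-(2 * l + 1) / 2 : ℝ) * 1 :=
        mul_le_mul (rpow_le_rpow_of_nonpos hε (le_add_of_nonneg_right (sq_nonneg t)) hp)
          (rpow_le_one_of_one_le_of_nonpos (le_add_of_nonneg_right (by positivity)) hq)
          (by positivity) (by positivity)
    _ = _ := mul_one _

lemma le_rpow (hε : 0 < ε) (hl : |l| ≤ 1 / 2) {s : ℝ} (hs : 0 < s) :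
    complementaryKernel ε l s ≤ s ^ (-(2 * l + 1)) := by
  obtain ⟨hp, hq⟩ := exponents_nonpos hl
  calc complementaryKernel ε l s ≤ (s ^ 2) ^ (-(2 * l + 1) / 2 : ℝ) * 1 :=
        mul_le_mul (rpow_le_rpow_of_nonpos (by positivity) (by linarith) hp)
          (rpow_le_one_of_one_le_of_nonpos (le_add_of_nonneg_right (by positivity)) hq)
          (by positivity) (by positivity)
    _ = s ^ (-(2 * l + 1)) := by
        rw [mul_one, ← rpow_natCast_mul hs.le]; ring_nf

lemma le_mul_rpow_neg_two (hε : 0 < ε) (hl : |l| ≤ 1 / 2) {s : ℝ} (hs : 0 < s) :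
    complementaryKernel ε l s ≤ ε ^ ((2 * l - 1) / 2 : ℝ) * s ^ (-2 : ℝ) := by
  obtain ⟨hp, hq⟩ := exponents_nonpos hl
  calc complementaryKernel ε l s
      ≤ (s ^ 2) ^ (-(2 * l + 1) / 2 : ℝ) * (ε * s ^ 2) ^ ((2 * l - 1) / 2 : ℝ) :=
        mul_le_mul (rpow_le_rpow_of_nonpos (by positivity) (by linarith) hp)
          (rpow_le_rpow_of_nonpos (by positivity) (by linarith) hq)
          (by positivity) (by positivity)
    _ = ε ^ ((2 * l - 1) / 2 : ℝ) * s ^ (-2 : ℝ) := by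
        rw [mul_rpow hε.le (by positivity), ← rpow_natCast_mul hs.le,
          ← rpow_natCast_mul hs.le, mul_left_comm, ← rpow_add hs]
        ring_nf

lemma integral_eq_two_mul_setIntegral_Ioi_zero (ε l : ℝ) :
    ∫ t, complementaryKernel ε l t = 2 * ∫ s in Ioi 0, complementaryKernel ε l s := by
  rw [← integral_comp_abs]
  simp only [complementaryKernel, sq_abs]

lemma setIntegral_Ioc_zero_le (hε : 0 < ε) (hl : |l| ≤ 1 / 2) {A : ℝ} (hA : 0 ≤ A) :
    ∫ s in Ioc 0 A, complementaryKernel ε l s ≤ A * ε ^ (-(2 * l + 1) / 2 : ℝ) := by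
  calc ∫ s in Ioc 0 A, complementaryKernel ε l s
      ≤ ∫ _ in Ioc 0 A, ε ^ (-(2 * l + 1) / 2 : ℝ) :=
        setIntegral_mono_on (continuous hε).integrableOn_Ioc
          (integrableOn_const measure_Ioc_lt_top.ne) measurableSet_Ioc
          fun s _ => le_const hε hl s
    _ = A * ε ^ (-(2 * l + 1) / 2 : ℝ) := by
        rw [setIntegral_const, Real.volume_real_Ioc_of_le hA, sub_zero, smul_eq_mul]

lemma setIntegral_Ioc_le (hε : 0 < ε) (hl : |l| ≤ 1 / 2) (hl₀ : l ≠ 0) {A B : ℝ} (hA : 0 < A)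
    (hAB : A ≤ B) :
    ∫ s in Ioc A B, complementaryKernel ε l s ≤ (B ^ (-2 * l) - A ^ (-2 * l)) / (-2 * l) := by
  have h0 : (0 : ℝ) ∉ uIcc A B := notMem_uIcc_of_lt hA (hA.trans_le hAB)
  calc ∫ s in Ioc A B, complementaryKernel ε l s ≤ ∫ s in Ioc A B, s ^ (-(2 * l + 1)) :=
        setIntegral_mono_on (continuous hε).integrableOn_Ioc
          ((intervalIntegrable_iff_integrableOn_Ioc_of_le hAB).mp
            (intervalIntegral.intervalIntegrable_rpow (Or.inr h0)))
          measurableSet_Ioc fun s hs => le_rpow hε hl (hA.trans hs.1)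
    _ = (B ^ (-2 * l) - A ^ (-2 * l)) / (-2 * l) := by
        rw [← intervalIntegral.integral_of_le hAB,
          integral_rpow (Or.inr ⟨by contrapose! hl₀; linarith, h0⟩)]
        ring_nf

lemma integrableOn_Ioi (hε : 0 < ε) (hl : |l| ≤ 1 / 2) {B : ℝ} (hB : 0 < B) :
    IntegrableOn (complementaryKernel ε l) (Ioi B) := by
  refine ((integrableOn_Ioi_rpow_of_lt (by norm_num : (-2 : ℝ) < -1) hB).const_mul
    (ε ^ ((2 * l - 1) / 2 : ℝ))).mono' (continuous hε).aestronglyMeasurable.restrict ?_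
  filter_upwards [self_mem_ae_restrict measurableSet_Ioi] with s hs
  rw [Real.norm_of_nonneg (nonneg hε s)]
  exact le_mul_rpow_neg_two hε hl (hB.trans hs)

lemma setIntegral_Ioi_le (hε : 0 < ε) (hl : |l| ≤ 1 / 2) {B : ℝ} (hB : 0 < B) :
    ∫ s in Ioi B, complementaryKernel ε l s ≤ ε ^ ((2 * l - 1) / 2 : ℝ) / B := by
  have hint := integrableOn_Ioi_rpow_of_lt (by norm_num : (-2 : ℝ) < -1) hB
  calc ∫ s in Ioi B, complementaryKernel ε l s
      ≤ ∫ s in Ioi B, ε ^ ((2 * l - 1) / 2 : ℝ) * s ^ (-2 : ℝ) :=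
        setIntegral_mono_on (integrableOn_Ioi hε hl hB) (hint.const_mul _) measurableSet_Ioi
          fun s hs => le_mul_rpow_neg_two hε hl (hB.trans hs)
    _ = ε ^ ((2 * l - 1) / 2 : ℝ) / B := by
        rw [integral_const_mul, integral_Ioi_rpow_of_lt (by norm_num) hB]
        norm_num [rpow_neg_one, div_eq_mul_inv]

lemma setIntegral_Ioi_zero_eq (hε : 0 < ε) (hl : |l| ≤ 1 / 2) {A B : ℝ} (hA : 0 < A)
    (hAB : A ≤ B) :
    ∫ s in Ioi 0, complementaryKernel ε l s = (∫ s in Ioc 0 A, complementaryKernel ε l s) +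
      (∫ s in Ioc A B, complementaryKernel ε l s) + ∫ s in Ioi B, complementaryKernel ε l s := by
  have hc := continuous (l := l) hε
  rw [← Ioc_union_Ioi_eq_Ioi hA.le, setIntegral_union (Ioc_disjoint_Ioi le_rfl) measurableSet_Ioi
      hc.integrableOn_Ioc (integrableOn_Ioi hε hl hA),
    ← Ioc_union_Ioi_eq_Ioi hAB, setIntegral_union (Ioc_disjoint_Ioi le_rfl) measurableSet_Ioi
      hc.integrableOn_Ioc (integrableOn_Ioi hε hl (hA.trans_le hAB)), add_assoc]

lemma setIntegral_Ioi_zero_exp_le (hl : |l| ≤ 1 / 2) (hl₀ : l ≠ 0) {r : ℝ} (hr : 0 ≤ r) :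
    ∫ s in Ioi 0, complementaryKernel (exp (-2 * r)) l s ≤
      (2 + 1 / (2 * |l|)) * exp (2 * |l| * r) := by
  have hAB : exp (-r) ≤ exp r := exp_le_exp.mpr (by linarith)
  have hε := exp_pos (-2 * r)
  have exp_le : ∀ x, |x| ≤ 2 * |l| → exp (x * r) ≤ exp (2 * |l| * r) := fun x hx =>
    exp_le_exp.mpr (mul_le_mul_of_nonneg_right ((le_abs_self x).trans hx) hr)
  rw [setIntegral_Ioi_zero_eq hε hl (exp_pos _) hAB]
  calc _ ≤ exp (-r) * exp (-2 * r) ^ (-(2 * l + 1) / 2 : ℝ) +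
        (exp r ^ (-2 * l) - exp (-r) ^ (-2 * l)) / (-2 * l) +
        exp (-2 * r) ^ ((2 * l - 1) / 2 : ℝ) / exp r := by
        gcongr ?_ + ?_ + ?_
        · exact setIntegral_Ioc_zero_le hε hl (exp_pos _).le
        · exact setIntegral_Ioc_le hε hl hl₀ (exp_pos _) hAB
        · exact setIntegral_Ioi_le hε hl (exp_pos _)
    _ = exp ((2 * l) * r) + (exp ((-2 * l) * r) - exp (-((-2 * l) * r))) / (-2 * l) +
        exp ((-2 * l) * r) := by
        simp only [← exp_mul, ← exp_add, ← exp_sub]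
        ring_nf
    _ ≤ exp (2 * |l| * r) + exp (|-2 * l| * r) / |-2 * l| + exp (2 * |l| * r) := by
        gcongr ?_ + ?_ + ?_
        · exact exp_le _ (by rw [abs_mul, abs_two])
        · exact exp_sub_exp_neg_div_le (mul_ne_zero (by norm_num) hl₀) r
        · exact exp_le _ (by rw [abs_mul, abs_neg, abs_two])
    _ = (2 + 1 / (2 * |l|)) * exp (2 * |l| * r) := by
        rw [abs_mul, abs_neg, abs_two]
        ring

end complementaryKernel

theorem complementary_series_integral_estimate :
    ∃ C : ℝ, ∀ l r : ℝ, 0 < |l| → |l| < 1 / 2 → 1 ≤ r →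
      Real.exp (-r) *
          ∫ t : ℝ, (Real.exp (-2 * r) + t ^ 2) ^ (-(2 * l + 1) / 2 : ℝ) *
            (1 + Real.exp (-2 * r) * t ^ 2) ^ ((2 * l - 1) / 2 : ℝ)
        ≤ (C / |l|) * Real.exp (-r * (1 - 2 * |l|)) := by
  refine ⟨3, fun l r hl₀ hl hr => ?_⟩
  change exp (-r) * ∫ t, complementaryKernel (exp (-2 * r)) l t ≤ _
  rw [complementaryKernel.integral_eq_two_mul_setIntegral_Ioi_zero]
  calc exp (-r) * (2 * ∫ s in Ioi 0, complementaryKernel (exp (-2 * r)) l s)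
      ≤ exp (-r) * (2 * ((2 + 1 / (2 * |l|)) * exp (2 * |l| * r))) := by
        gcongr
        exact complementaryKernel.setIntegral_Ioi_zero_exp_le hl.le (abs_pos.mp hl₀)
          (zero_le_one.trans hr)
    _ = (4 * |l| + 1) / |l| * exp (-r * (1 - 2 * |l|)) := by
        rw [mul_sub, mul_one, sub_eq_add_neg, exp_add]
        field_simp
        ring_nf
    _ ≤ 3 / |l| * exp (-r * (1 - 2 * |l|)) := by
        gcongr
        linarith
end

section
/- There exists a constant C such that for all r ≥ 1, e^{-r} · ∫_ℝ (e^{-2r} + t²)^{-1/2} · (1 + e^{-2r} t²)^{-1/2} dt ≤ C·(1 + r)·e^{-r}. -/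
/-!
With `b = e^{-r}`, the integrand is `((b² + t²)(1 + b²t²))^{-1/2}`. Since `(x + y)² ≤ 2(x² + y²)`,
it is at most `2 / ((b + |t|)(1 + b|t|)) = 2 e^r / ((|t| + e^{-r})(|t| + e^r))`, a rational function
whose integral over the line is `2 log (q/p) / (q - p)` for the poles `-p, -q`. Here this gives
`8 r e^r / (e^r - e^{-r}) ≤ 16 r`.
-/

open Real MeasureTheory Filter Topology Set

lemma rpow_neg_half_le_inv_of_sq_le {x y : ℝ} (hx : 0 < x) (h : x ^ 2 ≤ y) :
    y ^ (-(1 / 2) : ℝ) ≤ x⁻¹ := by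
  have hy : 0 ≤ y := (sq_nonneg x).trans h
  rw [rpow_neg hy, ← sqrt_eq_rpow]
  exact inv_anti₀ hx ((le_sqrt' hx).mpr h)

lemma rpow_neg_half_mul_rpow_neg_half_le {b s : ℝ} (hb : 0 < b) (hs : 0 ≤ s) :
    (b ^ 2 + s ^ 2) ^ (-(1 / 2) : ℝ) * (1 + b ^ 2 * s ^ 2) ^ (-(1 / 2) : ℝ)
      ≤ 2 * b⁻¹ * ((s + b) * (s + b⁻¹))⁻¹ := by
  rw [← mul_rpow (by positivity) (by positivity)]
  have hx : 0 < (s + b) * (1 + b * s) / 2 := by positivity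
  convert rpow_neg_half_le_inv_of_sq_le hx ?_ using 1
  · field_simp
    ring
  · nlinarith [sq_nonneg (b - s), sq_nonneg (1 - b * s), mul_nonneg hb.le hs,
      mul_nonneg (sq_nonneg (b - s)) (sq_nonneg (1 - b * s))]

lemma hasDerivAt_log_add_sub_log_add_div {p q s : ℝ} (hp : 0 < s + p) (hq : 0 < s + q)
    (hpq : p ≠ q) :
    HasDerivAt (fun s => (log (s + p) - log (s + q)) / (q - p)) ((s + p) * (s + q))⁻¹ s := by
  have hqp : q - p ≠ 0 := sub_ne_zero.mpr hpq.symm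
  refine ((((hasDerivAt_id' s).add_const p).log hp.ne').sub
    (((hasDerivAt_id' s).add_const q).log hq.ne') |>.div_const (q - p)).congr_deriv ?_
  field_simp
  ring

lemma tendsto_log_add_sub_log_add (p q : ℝ) :
    Tendsto (fun s => log (s + p) - log (s + q)) atTop (𝓝 0) := by
  simpa using (tendsto_log_comp_add_sub_log p).sub (tendsto_log_comp_add_sub_log q)

section

variable {p q : ℝ} (hp : 0 < p) (hq : 0 < q) (hpq : p ≠ q)
include hp hq hpq

lemma integrableOn_Ioi_inv_mul_add :
    IntegrableOn (fun s => ((s + p) * (s + q))⁻¹) (Ioi 0) :=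
  integrableOn_Ioi_deriv_of_nonneg'
    (fun s hs => hasDerivAt_log_add_sub_log_add_div (by grind) (by grind) hpq)
    (fun s hs => by have := mem_Ioi.mp hs; positivity)
    ((tendsto_log_add_sub_log_add p q).div_const (q - p))

lemma integral_Ioi_inv_mul_add :
    ∫ s in Ioi (0 : ℝ), ((s + p) * (s + q))⁻¹ = (log q - log p) / (q - p) := by
  rw [integral_Ioi_of_hasDerivAt_of_nonneg'
    (fun s hs => hasDerivAt_log_add_sub_log_add_div (by grind) (by grind) hpq)
    (fun s hs => by have := mem_Ioi.mp hs; positivity)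
    ((tendsto_log_add_sub_log_add p q).div_const (q - p))]
  simp only [zero_add]
  ring

end

lemma integral_rpow_neg_half_mul_rpow_neg_half_le {b : ℝ} (hb : 0 < b) (hb1 : b ≠ 1) :
    ∫ t : ℝ, (b ^ 2 + t ^ 2) ^ (-(1 / 2) : ℝ) * (1 + b ^ 2 * t ^ 2) ^ (-(1 / 2) : ℝ)
      ≤ 4 * b⁻¹ * ((log b⁻¹ - log b) / (b⁻¹ - b)) := by
  have hbinv : b ≠ b⁻¹ := fun h => hb1 (by field_simp at h; nlinarith)
  calc ∫ t : ℝ, (b ^ 2 + t ^ 2) ^ (-(1 / 2) : ℝ) * (1 + b ^ 2 * t ^ 2) ^ (-(1 / 2) : ℝ)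
      = 2 * ∫ s in Ioi (0 : ℝ), (b ^ 2 + s ^ 2) ^ (-(1 / 2) : ℝ) *
          (1 + b ^ 2 * s ^ 2) ^ (-(1 / 2) : ℝ) := by
        rw [← integral_comp_abs]
        simp only [sq_abs]
    _ ≤ 2 * ∫ s in Ioi (0 : ℝ), 2 * b⁻¹ * ((s + b) * (s + b⁻¹))⁻¹ := by
        refine mul_le_mul_of_nonneg_left (integral_mono_of_nonneg
          (Eventually.of_forall fun s => by positivity)
          ((integrableOn_Ioi_inv_mul_add hb (inv_pos.mpr hb) hbinv).const_mul _)
          ((ae_restrict_iff' measurableSet_Ioi).mpr (Eventually.of_forall fun s hs => ?_)))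
          zero_le_two
        exact rpow_neg_half_mul_rpow_neg_half_le hb (le_of_lt hs)
    _ = 4 * b⁻¹ * ((log b⁻¹ - log b) / (b⁻¹ - b)) := by
        rw [integral_const_mul, integral_Ioi_inv_mul_add hb (inv_pos.mpr hb) hbinv]
        ring

theorem principal_series_uniform_integral_estimate :
    ∃ C : ℝ, ∀ r : ℝ, 1 ≤ r →
      Real.exp (-r) *
          ∫ t : ℝ, (Real.exp (-2 * r) + t ^ 2) ^ (-(1/2) : ℝ) *
            (1 + Real.exp (-2 * r) * t ^ 2) ^ (-(1/2) : ℝ)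
        ≤ C * (1 + r) * Real.exp (-r) := by
  refine ⟨16, fun r hr => ?_⟩
  have hsq : exp (-2 * r) = exp (-r) ^ 2 := by rw [← exp_nat_mul]; ring_nf
  have hinv : (exp (-r))⁻¹ = exp r := by rw [exp_neg, inv_inv]
  have hlt : exp (-r) < 1 := exp_lt_one_iff.mpr (by linarith)
  have hgap : exp r / 2 ≤ exp r - exp (-r) := by linarith [add_one_le_exp r]
  have hint := integral_rpow_neg_half_mul_rpow_neg_half_le (exp_pos (-r)) hlt.ne
  rw [hinv, log_exp, log_exp, sub_neg_eq_add, mul_div_assoc'] at hint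
  have hbound : 4 * exp r * (r + r) / (exp r - exp (-r)) ≤ 16 * r := by
    rw [div_le_iff₀ (by linarith [exp_pos r])]
    nlinarith [mul_le_mul_of_nonneg_left hgap (by linarith : (0 : ℝ) ≤ 16 * r)]
  rw [hsq]
  calc exp (-r) * _ ≤ exp (-r) * (16 * r) := by gcongr; exact hint.trans hbound
    _ ≤ 16 * (1 + r) * exp (-r) := by nlinarith [exp_pos (-r)]
end

section
/- Let π be a unitary representation of a group G on a Hilbert space H, let (e_μ)_{μ ∈ P} (P ⊆ ℤ) be an orthonormal basis of H, let a : ℝ → G and k : ℝ → G be maps with π(k_θ) e_μ = e^{iμθ} e_μ for all θ ∈ ℝ and μ ∈ P. If |⟨π(a_r) e_μ, e_ν⟩| ≤ C·e^{-λr} for some constants C, λ and all r > 0, μ, ν ∈ P, then for all f, g ∈ H and r > 0: (∫_{-π}^{π} ∫_{-π}^{π} |⟨π(k_{θ₁} a_r k_{θ₂}) f, g⟩|² dθ₁ dθ₂)^{1/2} ≤ C·e^{-λr}·‖f‖·‖g‖. -/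
open Real MeasureTheory
open scoped InnerProductSpace

/-!
Expanding in the basis, `θ ↦ ⟪y, π(k_θ) x⟫` is the trigonometric series
`∑_μ ⟪y, e_μ⟫ ⟪e_μ, x⟫ e^{iμθ}`, whose coefficients are absolutely summable, so Parseval on the
circle gives `∫ |⟪π(k_θ) x, y⟫|² dθ = 2π ∑_μ |x_μ|² |y_μ|²`. Moving `π(k_{θ₁}) π(a_r)` to the
other side of the inner product and applying this in `θ₂` and then in `θ₁` (the `θ₁`-integral
commutes with the sum over `μ` by dominated convergence, each term being at most
`|f_μ|² ‖g‖²`) turns the double integral into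
`(2π)² ∑_μ |f_μ|² ∑_ν |⟪π(a_r) e_μ, e_ν⟫|² |g_ν|²`, which the pointwise bound and Parseval
in `H` estimate by `(2π C e^{-λr} ‖f‖ ‖g‖)²`.
-/

section Fourier

theorem fourier_coe_apply_two_pi (n : ℤ) (θ : ℝ) :
    fourier n (θ : AddCircle (2 * π)) = Complex.exp (Complex.I * n * θ) := by
  rw [fourier_coe_apply]
  congr 1
  field_simp [Complex.ofReal_ne_zero.mpr pi_ne_zero]
  push_cast
  ring

variable {T : ℝ} [Fact (0 < T)] {ι : Type*} {n : ι → ℤ} {c : ι → ℂ}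

theorem summable_smul_fourier (hc : Summable fun i => ‖c i‖) :
    Summable fun i => c i • (fourier (n i) : C(AddCircle T, ℂ)) :=
  .of_norm (by simpa [norm_smul, fourier_norm] using hc)

theorem hasSum_fourierCoeff_tsum_smul_fourier (hc : Summable fun i => ‖c i‖) (m : ℤ) :
    HasSum (fun i => c i * Pi.single (M := fun _ => ℂ) (n i) 1 m)
      (fourierCoeff ⇑(∑' i, c i • fourier (n i) : C(AddCircle T, ℂ)) m) := by
  -- The `m`-th Fourier coefficient is the `L²` pairing with `fourier m`, hence continuous.
  let L : C(AddCircle T, ℂ) →L[ℂ] ℂ :=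
    (innerSL ℂ (fourierBasis m)).comp (ContinuousMap.toLp 2 AddCircle.haarAddCircle ℂ)
  have hL (F : C(AddCircle T, ℂ)) : L F = fourierCoeff F m := by
    rw [← fourierCoeff_toLp, ← fourierBasis_repr, HilbertBasis.repr_apply_apply]
    rfl
  simpa [hL, fourierCoeff.const_smul, fourierCoeff_fourier] using
    L.hasSum (summable_smul_fourier hc).hasSum

theorem intervalIntegral_norm_sq_tsum_mul_exp (hn : n.Injective) (hc : Summable c) :
    ∫ θ in (-π)..π, ‖∑' i, c i * Complex.exp (Complex.I * n i * θ)‖ ^ 2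
      = 2 * π * ∑' i, ‖c i‖ ^ 2 := by
  have : Fact (0 < 2 * π) := ⟨by positivity⟩
  have hc' : Summable fun i => ‖c i‖ := summable_norm_iff.mpr hc
  set F : C(AddCircle (2 * π), ℂ) := ∑' i, c i • fourier (n i) with hFdef
  have hF (θ : ℝ) : F θ = ∑' i, c i * Complex.exp (Complex.I * n i * θ) := by
    rw [hFdef, ← ContinuousMap.tsum_apply (summable_smul_fourier hc')]
    simp only [ContinuousMap.smul_apply, smul_eq_mul, fourier_coe_apply_two_pi]
  have hcoeff (i : ι) : fourierCoeff F (n i) = c i := by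
    refine (hasSum_fourierCoeff_tsum_smul_fourier (T := 2 * π) (n := n) hc' (n i)).unique ?_
    convert hasSum_single i fun j hj => ?_
    · simp
    · simp [hn.ne hj]
  have hcoeff_zero (m : ℤ) (hm : m ∉ Set.range n) : fourierCoeff F m = 0 := by
    refine (hasSum_fourierCoeff_tsum_smul_fourier (T := 2 * π) (n := n) hc' m).unique ?_
    convert hasSum_zero with i
    simp only [Pi.single_apply, mul_ite, mul_one, mul_zero, ite_eq_right_iff]
    exact fun h => absurd ⟨i, h.symm⟩ hm
  have hparseval : ∑' m, ‖fourierCoeff F m‖ ^ 2 = ∫ t, ‖F t‖ ^ 2 ∂AddCircle.haarAddCircle := by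
    simp_rw [← fourierCoeff_toLp, tsum_sq_fourierCoeff]
    refine integral_congr_ae ?_
    filter_upwards [ContinuousMap.coeFn_toLp (E := ℂ) (p := 2) (𝕜 := ℂ)
      AddCircle.haarAddCircle F] with t ht
    rw [ht]
  calc ∫ θ in (-π)..π, ‖∑' i, c i * Complex.exp (Complex.I * n i * θ)‖ ^ 2
      = ∫ t : AddCircle (2 * π), ‖F t‖ ^ 2 := by
        simp_rw [← hF]
        simpa [show -π + 2 * π = π by ring] using
          AddCircle.intervalIntegral_preimage (2 * π) (-π) fun t => ‖F t‖ ^ 2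
    _ = 2 * π * ∫ t, ‖F t‖ ^ 2 ∂AddCircle.haarAddCircle := by
        rw [AddCircle.integral_haarAddCircle, smul_eq_mul, mul_inv_cancel_left₀ (by positivity)]
    _ = 2 * π * ∑' m, ‖fourierCoeff F m‖ ^ 2 := by
        rw [hparseval]
    _ = 2 * π * ∑' i, ‖c i‖ ^ 2 := by
        rw [← hn.tsum_eq fun m hm => by_contra fun h => hm (by simp [hcoeff_zero m h])]
        simp only [hcoeff]

end Fourier

theorem HilbertBasis.hasSum_norm_sq_repr {ι 𝕜 E : Type*} [RCLike 𝕜] [NormedAddCommGroup E]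
    [InnerProductSpace 𝕜 E] (b : HilbertBasis ι 𝕜 E) (x : E) :
    HasSum (fun i => ‖b.repr x i‖ ^ 2) (‖x‖ ^ 2) := by
  have := lp.hasSum_norm (p := 2) (by simp) (b.repr x)
  simpa using this

theorem tsum_mul_tsum_le_of_le {ι κ : Type*} {u : ι → ℝ} {v : κ → ℝ} {a : ι → κ → ℝ} {M : ℝ}
    (hu0 : ∀ i, 0 ≤ u i) (hu : Summable u) (hv0 : ∀ j, 0 ≤ v j) (hv : Summable v)
    (ha0 : ∀ i j, 0 ≤ a i j) (haM : ∀ i j, a i j ≤ M) :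
    ∑' i, u i * ∑' j, a i j * v j ≤ M * (∑' i, u i) * ∑' j, v j := by
  have hrow (i : ι) : ∑' j, a i j * v j ≤ M * ∑' j, v j := by
    have hle (j : κ) : a i j * v j ≤ M * v j := mul_le_mul_of_nonneg_right (haM i j) (hv0 j)
    rw [← tsum_mul_left]
    exact (hv.mul_left M).of_nonneg_of_le (fun j => mul_nonneg (ha0 i j) (hv0 j)) hle
      |>.tsum_le_tsum hle (hv.mul_left M)
  have hle (i : ι) : u i * ∑' j, a i j * v j ≤ (M * ∑' j, v j) * u i := by
    rw [mul_comm]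
    exact mul_le_mul_of_nonneg_right (hrow i) (hu0 i)
  calc ∑' i, u i * ∑' j, a i j * v j ≤ ∑' i, (M * ∑' j, v j) * u i :=
        (hu.mul_left _).of_nonneg_of_le
          (fun i => mul_nonneg (hu0 i) (tsum_nonneg fun j => mul_nonneg (ha0 i j) (hv0 j))) hle
          |>.tsum_le_tsum hle (hu.mul_left _)
    _ = M * (∑' i, u i) * ∑' j, v j := by rw [tsum_mul_left]; ring

section UnitaryFamily

variable {H : Type*} [NormedAddCommGroup H] [InnerProductSpace ℂ H] {P : Set ℤ}
  (e : HilbertBasis P ℂ H) {K : ℝ → H ≃ₗᵢ[ℂ] H}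

theorem hasSum_inner_apply_mul_exp
    (hK : ∀ (θ : ℝ) (μ : P), K θ (e μ) = Complex.exp (Complex.I * (μ : ℤ) * θ) • e μ)
    (x y : H) (θ : ℝ) :
    HasSum (fun μ : P => ⟪y, e μ⟫_ℂ * ⟪e μ, x⟫_ℂ * Complex.exp (Complex.I * (μ : ℤ) * θ))
      ⟪y, K θ x⟫_ℂ := by
  have h := (e.hasSum_repr x).mapL
    ((innerSL ℂ y).comp (K θ).toContinuousLinearEquiv.toContinuousLinearMap)
  simp only [ContinuousLinearMap.comp_apply, innerSL_apply_apply, ContinuousLinearEquiv.coe_coe,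
    LinearIsometryEquiv.coe_toContinuousLinearEquiv, map_smul, hK, smul_eq_mul,
    e.repr_apply_apply] at h
  simpa only [mul_comm, mul_left_comm, mul_assoc] using h

theorem continuous_inner_apply
    (hK : ∀ (θ : ℝ) (μ : P), K θ (e μ) = Complex.exp (Complex.I * (μ : ℤ) * θ) • e μ)
    (x y : H) : Continuous fun θ => ⟪y, K θ x⟫_ℂ := by
  simp only [← fun θ => (hasSum_inner_apply_mul_exp e hK x y θ).tsum_eq]
  refine continuous_tsum (fun μ => by fun_prop)
    (summable_norm_iff.mpr (e.summable_inner_mul_inner y x)) fun μ θ => ?_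
  simp [Complex.norm_exp]

theorem intervalIntegral_norm_inner_sq
    (hK : ∀ (θ : ℝ) (μ : P), K θ (e μ) = Complex.exp (Complex.I * (μ : ℤ) * θ) • e μ)
    (x y : H) :
    ∫ θ in (-π)..π, ‖⟪K θ x, y⟫_ℂ‖ ^ 2
      = 2 * π * ∑' μ, ‖e.repr x μ‖ ^ 2 * ‖e.repr y μ‖ ^ 2 := by
  have h := intervalIntegral_norm_sq_tsum_mul_exp Subtype.val_injective
    (e.summable_inner_mul_inner y x)
  simp only [fun θ => (hasSum_inner_apply_mul_exp e hK x y θ).tsum_eq] at h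
  simp only [norm_inner_symm (K _ x), h, norm_mul, mul_pow, e.repr_apply_apply]
  congr 1
  exact tsum_congr fun μ => by rw [norm_inner_symm, mul_comm]

theorem intervalIntegral_intervalIntegral_norm_inner_sq
    (hK : ∀ (θ : ℝ) (μ : P), K θ (e μ) = Complex.exp (Complex.I * (μ : ℤ) * θ) • e μ)
    (A : H ≃ₗᵢ[ℂ] H) (f g : H) :
    ∫ θ₁ in (-π)..π, ∫ θ₂ in (-π)..π, ‖⟪K θ₁ (A (K θ₂ f)), g⟫_ℂ‖ ^ 2
      = (2 * π) ^ 2 * ∑' μ, ‖e.repr f μ‖ ^ 2 *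
          ∑' ν, ‖⟪A (e μ), e ν⟫_ℂ‖ ^ 2 * ‖e.repr g ν‖ ^ 2 := by
  set φ : P → ℝ → ℝ := fun μ θ => ‖e.repr f μ‖ ^ 2 * ‖⟪K θ (A (e μ)), g⟫_ℂ‖ ^ 2
  have hinner (θ₁ : ℝ) :
      ∫ θ₂ in (-π)..π, ‖⟪K θ₁ (A (K θ₂ f)), g⟫_ℂ‖ ^ 2 = 2 * π * ∑' μ, φ μ θ₁ := by
    have hflip (θ₂ : ℝ) :
        ⟪K θ₁ (A (K θ₂ f)), g⟫_ℂ = ⟪K θ₂ f, A.symm ((K θ₁).symm g)⟫_ℂ := by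
      rw [LinearIsometryEquiv.inner_map_eq_flip, LinearIsometryEquiv.inner_map_eq_flip]
    simp only [hflip, intervalIntegral_norm_inner_sq e hK, φ]
    congr 1
    refine tsum_congr fun μ => ?_
    rw [e.repr_apply_apply (A.symm _), ← LinearIsometryEquiv.inner_map_eq_flip,
      ← LinearIsometryEquiv.inner_map_eq_flip]
  have hφ (μ : P) :
      ∫ θ in (-π)..π, φ μ θ
        = ‖e.repr f μ‖ ^ 2 * (2 * π * ∑' ν, ‖⟪A (e μ), e ν⟫_ℂ‖ ^ 2 * ‖e.repr g ν‖ ^ 2) := by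
    simp only [φ, intervalIntegral.integral_const_mul, intervalIntegral_norm_inner_sq e hK,
      e.repr_apply_apply, norm_inner_symm (e _)]
  have hφ_cont (μ : P) : Continuous (φ μ) := by
    simp only [φ, norm_inner_symm _ g]
    exact continuous_const.mul ((continuous_inner_apply e hK _ g).norm.pow 2)
  have hφ_nonneg (μ : P) (θ : ℝ) : 0 ≤ φ μ θ := by positivity
  have hφ_le (μ : P) (θ : ℝ) : φ μ θ ≤ ‖e.repr f μ‖ ^ 2 * ‖g‖ ^ 2 := by
    have h := norm_inner_le_norm (𝕜 := ℂ) (K θ (A (e μ))) g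
    simp only [LinearIsometryEquiv.norm_map, e.orthonormal.1 μ, one_mul] at h
    simp only [φ]
    gcongr
  have hbound_summable : Summable fun μ => ‖e.repr f μ‖ ^ 2 * ‖g‖ ^ 2 :=
    (e.hasSum_norm_sq_repr f).summable.mul_right _
  have hswap : HasSum (fun μ => ∫ θ in (-π)..π, φ μ θ) (∫ θ in (-π)..π, ∑' μ, φ μ θ) :=
    intervalIntegral.hasSum_integral_of_dominated_convergence
      (fun μ _ => ‖e.repr f μ‖ ^ 2 * ‖g‖ ^ 2) (fun μ => (hφ_cont μ).aestronglyMeasurable)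
      (fun μ => ae_of_all _ fun θ _ => (Real.norm_of_nonneg (hφ_nonneg μ θ)).trans_le (hφ_le μ θ))
      (ae_of_all _ fun _ _ => hbound_summable) intervalIntegrable_const
      (ae_of_all _ fun θ _ =>
        (hbound_summable.of_nonneg_of_le (hφ_nonneg · θ) (hφ_le · θ)).hasSum)
  simp only [hinner, intervalIntegral.integral_const_mul, ← hswap.tsum_eq, hφ]
  simp only [mul_left_comm _ (2 * π), tsum_mul_left]
  ring

end UnitaryFamily

theorem pointwise_to_integral_estimate_general
    {G : Type*} [Group G] {H : Type*} [NormedAddCommGroup H] [InnerProductSpace ℂ H]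
    {P : Set ℤ}
    (ρ : G →* (H ≃ₗᵢ[ℂ] H)) (e : HilbertBasis P ℂ H) (a k : ℝ → G) (C lam : ℝ)
    (hk : ∀ (θ : ℝ) (μ : P), ρ (k θ) (e μ) = Complex.exp (Complex.I * ((μ : ℤ) : ℂ) * (θ : ℂ)) • e μ)
    (hbound : ∀ r : ℝ, 0 < r → ∀ μ ν : P, ‖⟪ρ (a r) (e μ), e ν⟫_ℂ‖ ≤ C * Real.exp (-lam * r)) :
    ∀ (f g : H) (r : ℝ), 0 < r →
      Real.sqrt (∫ θ₁ in (-π)..π, ∫ θ₂ in (-π)..π,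
          ‖⟪ρ (k θ₁ * a r * k θ₂) f, g⟫_ℂ‖ ^ 2)
        ≤ 2 * π * (C * Real.exp (-lam * r) * ‖f‖ * ‖g‖) := by
  intro f g r hr
  set E := C * Real.exp (-lam * r)
  have hE : 0 ≤ E * ‖f‖ * ‖g‖ := by
    rcases isEmpty_or_nonempty P with _ | ⟨⟨μ⟩⟩
    · simp [show f = 0 from e.repr.injective (Subsingleton.elim _ _)]
    · have := (norm_nonneg _).trans (hbound r hr μ μ)
      positivity
  have hsum_le := tsum_mul_tsum_le_of_le (fun _ => sq_nonneg _) (e.hasSum_norm_sq_repr f).summable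
    (fun _ => sq_nonneg _) (e.hasSum_norm_sq_repr g).summable (fun _ _ => sq_nonneg _)
    fun μ ν => pow_le_pow_left₀ (norm_nonneg _) (hbound r hr μ ν) 2
  rw [(e.hasSum_norm_sq_repr f).tsum_eq, (e.hasSum_norm_sq_repr g).tsum_eq] at hsum_le
  simp only [map_mul, LinearIsometryEquiv.coe_mul, Function.comp_apply,
    intervalIntegral_intervalIntegral_norm_inner_sq e (K := fun θ => ρ (k θ)) hk (ρ (a r)) f g]
  refine Real.sqrt_le_iff.mpr ⟨by positivity, ?_⟩
  calc _ ≤ (2 * π) ^ 2 * (E ^ 2 * ‖f‖ ^ 2 * ‖g‖ ^ 2) := by gcongr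
    _ = (2 * π * (E * ‖f‖ * ‖g‖)) ^ 2 := by ring

theorem pointwise_to_integral_estimate
    {G : Type*} [Group G] {H : Type*} [NormedAddCommGroup H] [InnerProductSpace ℂ H]
    [CompleteSpace H] {P : Set ℤ}
    (ρ : G →* (H ≃ₗᵢ[ℂ] H)) (e : HilbertBasis P ℂ H) (a k : ℝ → G) (C lam : ℝ)
    (hk : ∀ (θ : ℝ) (μ : P), ρ (k θ) (e μ) = Complex.exp (Complex.I * ((μ : ℤ) : ℂ) * (θ : ℂ)) • e μ)
    (hbound : ∀ r : ℝ, 0 < r → ∀ μ ν : P, ‖⟪ρ (a r) (e μ), e ν⟫_ℂ‖ ≤ C * Real.exp (-lam * r)) :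
    ∀ (f g : H) (r : ℝ), 0 < r →
      Real.sqrt (∫ θ₁ in (-π)..π, ∫ θ₂ in (-π)..π,
          ‖⟪ρ (k θ₁ * a r * k θ₂) f, g⟫_ℂ‖ ^ 2)
        ≤ 2 * π * (C * Real.exp (-lam * r) * ‖f‖ * ‖g‖) :=
  pointwise_to_integral_estimate_general ρ e a k C lam hk hbound
end

section
/- Suppose L : ℝ≥0 → ℝ is measurable with |L(x)| ≤ A(x) + B(x) + C(x), where for some ν ≥ 2: A(x) = (νx)^{-1/4}·1_{[0,ν/2]}(x), B(x) = ν^{-1/4}|ν - x|^{-1/4}·1_{[ν/2, 3ν/2]}(x), C(x) = e^{-τx} for some fixed τ > 0. Then there is a constant C' independent of ν and s such that ∫_0^∞ |L(x)|·|x - s|^{-1/2} dx ≤ C' for all s ∈ ℝ. -/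
/-!
Multiply the envelope of `|L|` by the weight `|x - s|^(-1/2)`. On the first two pieces the
elementary inequality `a^(-1/4) b^(-1/2) ≤ a^(-3/4) + b^(-3/4)` leaves singularities
`|x - a|^(-3/4)` with `a ∈ {0, ν, s}`, each multiplied by `ν^(-1/4)`. Cut off at `|x - a| ≤ ν`,
such a singularity has integral `8 ν^(1/4)`, which the prefactor cancels; the part with
`|x - a| > ν` is at most `ν^(-3/4)` on the support `[0, 3ν/2]`, which again contributes `O(1)`.
For the piece `e^(-τx)` the same cut-off at radius `1` gives `4 + 1/τ`. No bound depends on `ν`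
or `s`.
-/

open Real MeasureTheory Set

theorem rpow_neg_mul_rpow_neg_le {a b p q : ℝ} (ha : 0 ≤ a) (hb : 0 ≤ b) (hp : 0 < p)
    (hq : 0 < q) : a ^ (-p) * b ^ (-q) ≤ a ^ (-(p + q)) + b ^ (-(p + q)) := by
  have key : ∀ m, 0 < m → m ≤ a → m ≤ b → a ^ (-p) * b ^ (-q) ≤ m ^ (-(p + q)) := by
    intro m hm hma hmb
    rw [neg_add, rpow_add hm]
    exact mul_le_mul (rpow_le_rpow_of_nonpos hm hma (by linarith))
      (rpow_le_rpow_of_nonpos hm hmb (by linarith)) (by positivity) (by positivity)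
  rcases ha.eq_or_lt with rfl | ha'
  · rw [zero_rpow (by linarith), zero_mul]; positivity
  rcases hb.eq_or_lt with rfl | hb'
  · rw [zero_rpow (by linarith), mul_zero]; positivity
  rcases le_total a b with hab | hba
  · linarith [key a ha' le_rfl hab, rpow_nonneg hb (-(p + q))]
  · linarith [key b hb' hba le_rfl, rpow_nonneg ha (-(p + q))]

noncomputable def singularBump (a c r x : ℝ) : ℝ :=
  (Iic c).indicator (fun t => t ^ r) |x - a|

section singularBump

variable {a c r x : ℝ}

theorem singularBump_nonneg : 0 ≤ singularBump a c r x :=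
  indicator_nonneg (fun _ _ => rpow_nonneg (abs_nonneg _) _) _

theorem singularBump_of_abs_sub_le (h : |x - a| ≤ c) : singularBump a c r x = |x - a| ^ r :=
  indicator_of_mem (mem_Iic.mpr h) _

theorem integral_singularBump (hc : 0 ≤ c) (hr : -1 < r) :
    ∫ x, singularBump a c r x = 2 * (c ^ (r + 1) / (r + 1)) := by
  unfold singularBump
  rw [integral_sub_right_eq_self (fun x => (Iic c).indicator (fun t => t ^ r) |x|) a,
    integral_comp_abs, setIntegral_indicator measurableSet_Iic, Ioi_inter_Iic,
    ← intervalIntegral.integral_of_le hc, integral_rpow (Or.inl hr),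
    zero_rpow (by linarith), sub_zero]

theorem integrable_singularBump (hc : 0 < c) (hr : -1 < r) :
    Integrable (singularBump a c r) := by
  refine Integrable.of_integral_ne_zero ?_
  rw [integral_singularBump hc.le hr]
  have : 0 < r + 1 := by linarith
  positivity

theorem setIntegral_singularBump_le (s : Set ℝ) (hc : 0 < c) (hr : -1 < r) :
    ∫ x in s, singularBump a c r x ≤ 2 * (c ^ (r + 1) / (r + 1)) :=
  (integral_singularBump hc.le hr).symm ▸ setIntegral_le_integral (integrable_singularBump hc hr)
    (Filter.Eventually.of_forall fun _ => singularBump_nonneg)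

theorem mul_abs_sub_rpow_le_singularBump_add {y : ℝ} (hc : 0 < c) (hr : r ≤ 0) (hy0 : 0 ≤ y)
    (hy1 : y ≤ 1) : y * |x - a| ^ r ≤ singularBump a c r x + c ^ r * y := by
  by_cases h : |x - a| ≤ c
  · rw [singularBump_of_abs_sub_le h]
    have := mul_le_of_le_one_left (rpow_nonneg (abs_nonneg (x - a)) r) hy1
    have : 0 ≤ c ^ r * y := by positivity
    linarith
  · have := rpow_le_rpow_of_nonpos hc (not_le.mp h).le hr
    nlinarith [singularBump_nonneg (a := a) (c := c) (r := r) (x := x)]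

end singularBump

noncomputable def laguerreEnvelope (τ ν x : ℝ) : ℝ :=
  Set.indicator (Set.Icc 0 (ν / 2)) (fun x => (ν * x) ^ (-(1/4) : ℝ)) x +
    Set.indicator (Set.Icc (ν / 2) (3 * ν / 2))
      (fun x => ν ^ (-(1/4) : ℝ) * |ν - x| ^ (-(1/4) : ℝ)) x +
    Real.exp (-τ * x)

noncomputable def laguerreMajorant (τ ν s x : ℝ) : ℝ :=
  ν ^ (-(1/4) : ℝ) * (singularBump 0 ν (-(3/4)) x + singularBump ν ν (-(3/4)) x +
      2 * singularBump s ν (-(3/4)) x) +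
    2 * ν⁻¹ * (Icc 0 (3 * ν / 2)).indicator 1 x + singularBump s 1 (-(1/2)) x + exp (-τ * x)

section laguerre

variable {τ ν s x : ℝ}

theorem rpow_neg_quarter_mul_le_of_mem_Icc (hν : 0 < ν) (hx : x ∈ Icc 0 (3 * ν / 2)) {t : ℝ}
    (ht : 0 ≤ t) :
    ν ^ (-(1/4) : ℝ) * (t ^ (-(1/4) : ℝ) * |x - s| ^ (-(1/2) : ℝ)) ≤
      ν ^ (-(1/4) : ℝ) * (t ^ (-(3/4) : ℝ) + singularBump s ν (-(3/4)) x) +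
        ν⁻¹ * (Icc 0 (3 * ν / 2)).indicator 1 x := by
  have hprod := rpow_neg_mul_rpow_neg_le ht (abs_nonneg (x - s))
    (by norm_num : (0 : ℝ) < 1/4) (by norm_num : (0 : ℝ) < 1/2)
  rw [show (1/4 + 1/2 : ℝ) = 3/4 by norm_num] at hprod
  have hfar := mul_abs_sub_rpow_le_singularBump_add (x := x) (a := s) hν
    (by norm_num : (-(3/4) : ℝ) ≤ 0) zero_le_one le_rfl
  rw [one_mul, mul_one] at hfar
  have hscale : ν ^ (-(1/4) : ℝ) * ν ^ (-(3/4) : ℝ) = ν⁻¹ := by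
    rw [← rpow_add hν, ← rpow_neg_one]; norm_num
  rw [indicator_of_mem hx, Pi.one_apply, mul_one, ← hscale]
  calc ν ^ (-(1/4) : ℝ) * (t ^ (-(1/4) : ℝ) * |x - s| ^ (-(1/2) : ℝ))
      ≤ ν ^ (-(1/4) : ℝ) * (t ^ (-(3/4) : ℝ) + |x - s| ^ (-(3/4) : ℝ)) := by gcongr
    _ ≤ ν ^ (-(1/4) : ℝ) * (t ^ (-(3/4) : ℝ) + (singularBump s ν (-(3/4)) x +
          ν ^ (-(3/4) : ℝ))) := by gcongr
    _ = _ := by ring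

theorem indicator_Icc_zero_mul_le (hν : 0 < ν) (hx : 0 ≤ x) :
    (Icc 0 (ν / 2)).indicator (fun x => (ν * x) ^ (-(1/4) : ℝ)) x * |x - s| ^ (-(1/2) : ℝ) ≤
      ν ^ (-(1/4) : ℝ) * (singularBump 0 ν (-(3/4)) x + singularBump s ν (-(3/4)) x) +
        ν⁻¹ * (Icc 0 (3 * ν / 2)).indicator 1 x := by
  by_cases hxA : x ∈ Icc 0 (ν / 2)
  · have hxν : |x - 0| ≤ ν := by rw [sub_zero, abs_of_nonneg hx]; linarith [hxA.2]
    have hbump : singularBump 0 ν (-(3/4)) x = x ^ (-(3/4) : ℝ) := by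
      rw [singularBump_of_abs_sub_le hxν, sub_zero, abs_of_nonneg hx]
    rw [indicator_of_mem hxA, mul_rpow hν.le hx, mul_assoc, hbump]
    exact rpow_neg_quarter_mul_le_of_mem_Icc hν ⟨hx, by linarith [hxA.2]⟩ hx
  · rw [indicator_of_notMem hxA, zero_mul]
    exact add_nonneg
      (mul_nonneg (by positivity) (add_nonneg singularBump_nonneg singularBump_nonneg))
      (mul_nonneg (by positivity) (indicator_nonneg (by simp) _))

theorem indicator_Icc_half_mul_le (hν : 0 < ν) (hx : 0 ≤ x) :
    (Icc (ν / 2) (3 * ν / 2)).indicator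
        (fun x => ν ^ (-(1/4) : ℝ) * |ν - x| ^ (-(1/4) : ℝ)) x * |x - s| ^ (-(1/2) : ℝ) ≤
      ν ^ (-(1/4) : ℝ) * (singularBump ν ν (-(3/4)) x + singularBump s ν (-(3/4)) x) +
        ν⁻¹ * (Icc 0 (3 * ν / 2)).indicator 1 x := by
  by_cases hxB : x ∈ Icc (ν / 2) (3 * ν / 2)
  · have hbump : singularBump ν ν (-(3/4)) x = |ν - x| ^ (-(3/4) : ℝ) := by
      rw [singularBump_of_abs_sub_le (abs_le.mpr ⟨by linarith [hxB.1], by linarith [hxB.2]⟩),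
        abs_sub_comm]
    rw [indicator_of_mem hxB, mul_assoc, hbump]
    exact rpow_neg_quarter_mul_le_of_mem_Icc hν ⟨hx, hxB.2⟩ (abs_nonneg _)
  · rw [indicator_of_notMem hxB, zero_mul]
    exact add_nonneg
      (mul_nonneg (by positivity) (add_nonneg singularBump_nonneg singularBump_nonneg))
      (mul_nonneg (by positivity) (indicator_nonneg (by simp) _))

theorem exp_neg_mul_mul_abs_sub_rpow_le (hτ : 0 ≤ τ) (hx : 0 ≤ x) :
    exp (-τ * x) * |x - s| ^ (-(1/2) : ℝ) ≤ singularBump s 1 (-(1/2)) x + exp (-τ * x) := by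
  have hexp : exp (-τ * x) ≤ 1 := exp_le_one_iff.mpr (by nlinarith)
  simpa using mul_abs_sub_rpow_le_singularBump_add (x := x) (a := s) zero_lt_one
    (by norm_num : (-(1/2) : ℝ) ≤ 0) (exp_pos _).le hexp

theorem laguerreEnvelope_mul_le_laguerreMajorant (hτ : 0 ≤ τ) (hν : 0 < ν) (hx : 0 ≤ x) :
    laguerreEnvelope τ ν x * |x - s| ^ (-(1/2) : ℝ) ≤ laguerreMajorant τ ν s x := by
  have hA := indicator_Icc_zero_mul_le (s := s) hν hx
  have hB := indicator_Icc_half_mul_le (s := s) hν hx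
  have hC := exp_neg_mul_mul_abs_sub_rpow_le (s := s) hτ hx
  unfold laguerreEnvelope laguerreMajorant
  linarith

theorem rpow_neg_quarter_mul_setIntegral_singularBump_le (S : Set ℝ) (a : ℝ) (hν : 0 < ν) :
    ν ^ (-(1/4) : ℝ) * ∫ x in S, singularBump a ν (-(3/4)) x ≤ 8 := by
  have h := setIntegral_singularBump_le S (a := a) hν (by norm_num : (-1 : ℝ) < -(3/4))
  have hscale : ν ^ (-(1/4) : ℝ) * ν ^ (-(3/4) + 1 : ℝ) = 1 := by
    rw [← rpow_add hν]; norm_num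
  calc ν ^ (-(1/4) : ℝ) * ∫ x in S, singularBump a ν (-(3/4)) x
      ≤ ν ^ (-(1/4) : ℝ) * (2 * (ν ^ (-(3/4) + 1 : ℝ) / (-(3/4) + 1))) := by gcongr
    _ = 2 * (ν ^ (-(1/4) : ℝ) * ν ^ (-(3/4) + 1 : ℝ)) / (-(3/4) + 1) := by ring
    _ = 8 := by rw [hscale]; norm_num

theorem setIntegral_indicator_Icc_one_le (hν : 0 < ν) :
    ∫ x in Ioi 0, (Icc 0 (3 * ν / 2)).indicator (1 : ℝ → ℝ) x ≤ 3 * ν / 2 := by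
  have hint : Integrable ((Icc 0 (3 * ν / 2)).indicator (1 : ℝ → ℝ)) :=
    (integrable_indicator_iff measurableSet_Icc).mpr (integrableOn_const measure_Icc_lt_top.ne)
  calc ∫ x in Ioi 0, (Icc 0 (3 * ν / 2)).indicator (1 : ℝ → ℝ) x
      ≤ ∫ x, (Icc 0 (3 * ν / 2)).indicator (1 : ℝ → ℝ) x :=
        setIntegral_le_integral hint (Filter.Eventually.of_forall (indicator_nonneg (by simp)))
    _ = 3 * ν / 2 := by
        rw [integral_indicator_one measurableSet_Icc, volume_real_Icc_of_le (by linarith),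
          sub_zero]

theorem integrableOn_laguerreMajorant_and_setIntegral_le (hτ : 0 < τ) (hν : 0 < ν) :
    IntegrableOn (laguerreMajorant τ ν s) (Ioi 0) ∧
      ∫ x in Ioi 0, laguerreMajorant τ ν s x ≤ 39 + τ⁻¹ := by
  have hbump : ∀ a, IntegrableOn (singularBump a ν (-(3/4))) (Ioi 0) :=
    fun a => (integrable_singularBump hν (by norm_num)).integrableOn
  have hind : IntegrableOn ((Icc 0 (3 * ν / 2)).indicator (1 : ℝ → ℝ)) (Ioi 0) :=
    ((integrable_indicator_iff measurableSet_Icc).mpr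
      (integrableOn_const measure_Icc_lt_top.ne)).integrableOn
  have hbump₁ : IntegrableOn (singularBump s 1 (-(1/2))) (Ioi 0) :=
    (integrable_singularBump one_pos (by norm_num)).integrableOn
  have hexp : IntegrableOn (fun x => exp (-τ * x)) (Ioi 0) := exp_neg_integrableOn_Ioi 0 hτ
  have hexp_eq : ∫ x in Ioi 0, exp (-τ * x) = τ⁻¹ := by
    rw [integral_exp_mul_Ioi (neg_neg_of_pos hτ), mul_zero, exp_zero, neg_div_neg_eq, one_div]
  have hbound₀ := rpow_neg_quarter_mul_setIntegral_singularBump_le (Ioi 0) 0 hν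
  have hbound_ν := rpow_neg_quarter_mul_setIntegral_singularBump_le (Ioi 0) ν hν
  have hbound_s := rpow_neg_quarter_mul_setIntegral_singularBump_le (Ioi 0) s hν
  have hhalf := setIntegral_singularBump_le (Ioi 0) (a := s) one_pos
    (by norm_num : (-1 : ℝ) < -(1/2))
  norm_num at hhalf
  have hind_le : 2 * ν⁻¹ * ∫ x in Ioi 0, (Icc 0 (3 * ν / 2)).indicator (1 : ℝ → ℝ) x ≤ 3 :=
    calc _ ≤ 2 * ν⁻¹ * (3 * ν / 2) := by gcongr; exact setIntegral_indicator_Icc_one_le hν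
      _ = 3 := by field_simp
  unfold laguerreMajorant
  refine ⟨by apply_rules [Integrable.add, Integrable.const_mul], ?_⟩
  rw [integral_add, integral_add, integral_add, integral_const_mul, integral_add, integral_add,
    integral_const_mul, integral_const_mul]
  · linarith
  all_goals apply_rules [Integrable.add, Integrable.const_mul]

end laguerre

theorem laguerre_type_uniform_integral_bound (τ : ℝ) (hτ : 0 < τ) :
    ∃ C' : ℝ, ∀ ν : ℝ, 2 ≤ ν → ∀ L : ℝ → ℝ, Measurable L →
      (∀ x : ℝ, 0 ≤ x → |L x| ≤
          Set.indicator (Set.Icc 0 (ν / 2)) (fun x => (ν * x) ^ (-(1/4) : ℝ)) x +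
          Set.indicator (Set.Icc (ν / 2) (3 * ν / 2))
            (fun x => ν ^ (-(1/4) : ℝ) * |ν - x| ^ (-(1/4) : ℝ)) x +
          Real.exp (-τ * x)) →
      ∀ s : ℝ, ∫ x in Set.Ioi (0 : ℝ), |L x| * |x - s| ^ (-(1/2) : ℝ) ≤ C' := by
  refine ⟨39 + τ⁻¹, fun ν hν L _ hL s => ?_⟩
  have hν0 : 0 < ν := by linarith
  obtain ⟨hint, hle⟩ := integrableOn_laguerreMajorant_and_setIntegral_le (s := s) hτ hν0
  refine (integral_mono_of_nonneg ?_ hint ?_).trans hle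
  · exact Filter.Eventually.of_forall fun x => by positivity
  · filter_upwards [ae_restrict_mem measurableSet_Ioi] with x hx
    exact (mul_le_mul_of_nonneg_right (hL x hx.le) (by positivity)).trans
      (laguerreEnvelope_mul_le_laguerreMajorant hτ.le hν0 hx.le)
end

section
/- For every r ≥ 1, e^{-2r}·sinh(2(r-1)) + e^{-4r}·(r-1) ≤ 1/(2e²) + 1/(4e⁵). -/
/-!
Both summands are bounded separately, uniformly in `r`: `sinh y ≤ eʸ / 2` turns the first one into
`e⁻²/2`, and writing the second as `e⁻⁴ · t e^{-4t}` with `t = r - 1`, the maximum `1/(4e)` of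
`t ↦ t e^{-4t}` gives `e⁻⁵/4`.
-/

open Real

theorem Real.sinh_le_exp_div_two (x : ℝ) : sinh x ≤ exp x / 2 := by
  rw [sinh_eq]
  linarith [exp_pos (-x)]

theorem Real.mul_exp_neg_mul_le {c : ℝ} (hc : 0 < c) (t : ℝ) :
    t * exp (-(c * t)) ≤ exp (-1) / c := by
  rw [le_div_iff₀ hc, mul_right_comm]
  exact mul_exp_neg_le_exp_neg_one (t * c) |>.trans_eq' (by ring_nf)

theorem exp_neg_two_mul_mul_sinh_le (r : ℝ) :
    exp (-2 * r) * sinh (2 * (r - 1)) ≤ 1 / (2 * exp 2) := by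
  calc exp (-2 * r) * sinh (2 * (r - 1))
      ≤ exp (-2 * r) * (exp (2 * (r - 1)) / 2) := by
        gcongr
        exact sinh_le_exp_div_two _
    _ = exp (-2) / 2 := by rw [mul_div_assoc', ← exp_add]; ring_nf
    _ = 1 / (2 * exp 2) := by rw [exp_neg]; field_simp

theorem exp_neg_four_mul_mul_sub_one_le (r : ℝ) :
    exp (-4 * r) * (r - 1) ≤ 1 / (4 * exp 5) := by
  calc exp (-4 * r) * (r - 1) = exp (-4) * ((r - 1) * exp (-(4 * (r - 1)))) := by
        rw [mul_left_comm, ← exp_add]; ring_nf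
    _ ≤ exp (-4) * (exp (-1) / 4) := by gcongr; exact mul_exp_neg_mul_le four_pos _
    _ = 1 / (4 * exp 5) := by
        rw [mul_div_assoc', ← exp_add, show (-4 : ℝ) + -1 = -5 by norm_num, exp_neg]
        field_simp

theorem middle_term_numeric_bound_general (r : ℝ) :
    Real.exp (-2 * r) * Real.sinh (2 * (r - 1)) + Real.exp (-4 * r) * (r - 1)
      ≤ 1 / (2 * Real.exp 2) + 1 / (4 * Real.exp 5) :=
  add_le_add (exp_neg_two_mul_mul_sinh_le r) (exp_neg_four_mul_mul_sub_one_le r)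

theorem middle_term_numeric_bound (r : ℝ) (hr : 1 ≤ r) :
    Real.exp (-2 * r) * Real.sinh (2 * (r - 1)) + Real.exp (-4 * r) * (r - 1)
      ≤ 1 / (2 * Real.exp 2) + 1 / (4 * Real.exp 5) :=
  middle_term_numeric_bound_general r
end
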